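/- Suppose the conditions of the consistency lemma hold: A is positive semi-definite, θ = β'Aβ = O(1), trace(Ã²) = o(1), errors independent with max_i(E[ε_i⁴] + σ_i^{-2}) = O(1), max_i P_ii ≤ c < 1, and max_i (x_i'β)² = O(1). Then the variance of the linear part of θ̂ − θ, namely Var(2 Σ_i Σ_ℓ B_{iℓ} x_ℓ'β ε_i) = 4 Σ_i (Σ_ℓ B_{iℓ} x_ℓ'β)² σ_i², is bounded above by 4 (max_i σ_i²) · θ · λ_1(Ã), and hence is o(1). -/

import Mathlib

/-!
With `w = S⁻¹Aβ` the inner sums are `x_i'w`, so the linear part is at most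
`max σ² · Σ_i (x_i'w)² = max σ² · w'Sw = max σ² · β'AS⁻¹Aβ`. Writing `S = R²`, `A = RÃR` and
`z = Rβ` gives `β'AS⁻¹Aβ = z'Ã²z` and `β'Aβ = z'Ãz`, and `Ã² ≤ λ_max(Ã) Ã` because the
spectrum of the positive semidefinite `Ã` lies in `[0, λ_max(Ã)]`.
-/

open Matrix

section GramMatrix

variable {ι m α : Type*} [Fintype ι] [Fintype m] [CommSemiring α] (x : ι → m → α)

theorem sum_vecMulVec_self_mulVec (v : m → α) :
    (∑ i, vecMulVec (x i) (x i)) *ᵥ v = ∑ i, (x i ⬝ᵥ v) • x i := by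
  simp only [Matrix.sum_mulVec, vecMulVec_mulVec, op_smul_eq_smul]

theorem sum_dotProduct_sq (v : m → α) :
    ∑ i, (x i ⬝ᵥ v) ^ 2 = v ⬝ᵥ (∑ i, vecMulVec (x i) (x i)) *ᵥ v := by
  simp only [sum_vecMulVec_self_mulVec, dotProduct_sum, dotProduct_smul, smul_eq_mul,
    dotProduct_comm v (x _), sq]

theorem sum_dotProduct_mulVec_mul_dotProduct (u v : m → α) (M : Matrix m m α) :
    ∑ i, (u ⬝ᵥ M *ᵥ x i) * (x i ⬝ᵥ v) = u ⬝ᵥ (M * ∑ i, vecMulVec (x i) (x i)) *ᵥ v := by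
  simp only [← mulVec_mulVec, sum_vecMulVec_self_mulVec, mulVec_sum, mulVec_smul,
    dotProduct_sum, dotProduct_smul, smul_eq_mul, mul_comm]

end GramMatrix

theorem dotProduct_transpose_mul_mul_mulVec {m α : Type*} [Fintype m] [CommSemiring α]
    (R M : Matrix m m α) (v : m → α) :
    v ⬝ᵥ (Rᵀ * M * R) *ᵥ v = (R *ᵥ v) ⬝ᵥ M *ᵥ (R *ᵥ v) := by
  rw [← mulVec_mulVec, ← mulVec_mulVec, dotProduct_mulVec v Rᵀ, vecMul_transpose]

theorem mul_nonsing_inv_mul_mul_nonsing_inv_mul {m α : Type*} [Fintype m] [DecidableEq m]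
    [CommRing α] {R : Matrix m m α} (hR : IsUnit R.det) (A : Matrix m m α) :
    R * (R⁻¹ * A * R⁻¹) * R = A := by
  rw [← Matrix.mul_assoc, ← Matrix.mul_assoc, mul_nonsing_inv _ hR, Matrix.one_mul,
    nonsing_inv_mul_cancel_right _ _ hR]

theorem sum_mul_le_iSup_mul_sum {ι : Type*} [Fintype ι] {f g : ι → ℝ} (hf : ∀ i, 0 ≤ f i) :
    ∑ i, f i * g i ≤ (⨆ i, g i) * ∑ i, f i := by
  rw [Finset.mul_sum]
  refine Finset.sum_le_sum fun i _ => ?_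
  rw [mul_comm (⨆ i, g i)]
  exact mul_le_mul_of_nonneg_left (le_ciSup (Set.finite_range g).bddAbove i) (hf i)

namespace Matrix.PosSemidef

open scoped MatrixOrder

variable {m : Type*} [Fintype m] [DecidableEq m] {M : Matrix m m ℝ}

theorem nonsing_inv_mul_mul_nonsing_inv {A R : Matrix m m ℝ} (hA : A.PosSemidef)
    (hR_symm : Rᵀ = R) : (R⁻¹ * A * R⁻¹).PosSemidef := by
  have hRinv_symm : (R⁻¹)ᴴ = R⁻¹ := by
    rw [conjTranspose_eq_transpose_of_trivial, transpose_nonsing_inv, hR_symm]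
  simpa only [hRinv_symm] using hA.conjTranspose_mul_mul_same R⁻¹

theorem sq_le_iSup_eigenvalues_smul (hM : M.PosSemidef) :
    M ^ 2 ≤ (⨆ j, hM.1.eigenvalues j) • M := by
  have : IsSelfAdjoint M := hM.1
  rw [← cfc_pow_id (R := ℝ) M 2, ← cfc_const_mul_id (R := ℝ) _ M]
  refine cfc_mono fun t ht => ?_
  obtain ⟨j, rfl⟩ := hM.1.spectrum_real_eq_range_eigenvalues ▸ ht
  have h_nonneg := hM.eigenvalues_nonneg j
  have h_le : hM.1.eigenvalues j ≤ ⨆ j, hM.1.eigenvalues j :=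
    le_ciSup (Set.finite_range _).bddAbove j
  nlinarith

theorem dotProduct_sq_mulVec_le (hM : M.PosSemidef) (z : m → ℝ) :
    z ⬝ᵥ (M ^ 2) *ᵥ z ≤ (⨆ j, hM.1.eigenvalues j) * (z ⬝ᵥ M *ᵥ z) := by
  have h := (le_iff.mp hM.sq_le_iSup_eigenvalues_smul).dotProduct_mulVec_nonneg z
  rw [star_trivial, sub_mulVec, dotProduct_sub, smul_mulVec, dotProduct_smul, smul_eq_mul] at h
  linarith

theorem dotProduct_mul_inv_mul_mulVec_le (hM : M.PosSemidef) {R : Matrix m m ℝ}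
    (hR_symm : Rᵀ = R) (hR : IsUnit R.det) (β : m → ℝ) :
    β ⬝ᵥ ((R * M * R) * (R * R)⁻¹ * (R * M * R)) *ᵥ β
      ≤ (⨆ j, hM.1.eigenvalues j) * (β ⬝ᵥ (R * M * R) *ᵥ β) := by
  have h_cancel : (R * M * R) * (R * R)⁻¹ * (R * M * R) = Rᵀ * M ^ 2 * R := by
    rw [hR_symm, mul_inv_rev, sq]
    simp only [Matrix.mul_assoc, mul_nonsing_inv_cancel_left _ _ hR,
      nonsing_inv_mul_cancel_left _ _ hR]
  have h_form : R * M * R = Rᵀ * M * R := by rw [hR_symm]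
  rw [h_cancel, h_form, dotProduct_transpose_mul_mul_mulVec, dotProduct_transpose_mul_mul_mulVec]
  exact hM.dotProduct_sq_mulVec_le _

end Matrix.PosSemidef

theorem linear_part_variance_bound_general {n k : ℕ}
    (x : Fin n → Fin k → ℝ) (β : Fin k → ℝ) (σ : Fin n → ℝ)
    (A Sxx R : Matrix (Fin k) (Fin k) ℝ)
    (hA : A.PosSemidef)
    (hSxx : Sxx = ∑ i, vecMulVec (x i) (x i))
    (hRsym : Rᵀ = R) (hRR : R * R = Sxx) (hR : IsUnit R.det)
    (Atil : Matrix (Fin k) (Fin k) ℝ)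
    (hAtil : Atil = R⁻¹ * A * R⁻¹)
    (hherm : Atil.IsHermitian)
    (B : Fin n → Fin n → ℝ)
    (hB : ∀ i ℓ, B i ℓ = x i ⬝ᵥ (Sxx⁻¹ * A * Sxx⁻¹).mulVec (x ℓ)) :
    4 * ∑ i, (∑ ℓ, B i ℓ * (x ℓ ⬝ᵥ β)) ^ 2 * (σ i) ^ 2
      ≤ 4 * (⨆ i, (σ i) ^ 2) * (β ⬝ᵥ A.mulVec β) * (⨆ j, hherm.eigenvalues j) := by
  have hS : IsUnit Sxx.det := by rw [← hRR, det_mul]; exact hR.mul hR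
  have hA_eq : A = R * Atil * R := by rw [hAtil, mul_nonsing_inv_mul_mul_nonsing_inv_mul hR]
  have hAtil_psd : Atil.PosSemidef := hAtil ▸ hA.nonsing_inv_mul_mul_nonsing_inv hRsym
  set w := (Sxx⁻¹ * A) *ᵥ β
  have h_linear (i : Fin n) : ∑ ℓ, B i ℓ * (x ℓ ⬝ᵥ β) = x i ⬝ᵥ w := by
    simp only [hB, sum_dotProduct_mulVec_mul_dotProduct, ← hSxx,
      nonsing_inv_mul_cancel_right _ _ hS, w]
  have h_quadratic : ∑ i, (x i ⬝ᵥ w) ^ 2 = β ⬝ᵥ (A * Sxx⁻¹ * A) *ᵥ β := by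
    have hA_symm : Aᵀ = A := hA.1
    have hSinv_symm : (Sxx⁻¹)ᵀ = Sxx⁻¹ := by
      rw [transpose_nonsing_inv, ← hRR, transpose_mul, hRsym]
    rw [sum_dotProduct_sq, ← hSxx, ← dotProduct_transpose_mul_mul_mulVec, transpose_mul,
      hA_symm, hSinv_symm, nonsing_inv_mul_cancel_right _ _ hS, Matrix.mul_assoc]
  have h_whitened :
      β ⬝ᵥ (A * Sxx⁻¹ * A) *ᵥ β ≤ (⨆ j, hherm.eigenvalues j) * (β ⬝ᵥ A *ᵥ β) := by
    rw [← hRR, hA_eq]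
    exact hAtil_psd.dotProduct_mul_inv_mul_mulVec_le hRsym hR β
  have hσ_nonneg : 0 ≤ ⨆ i, (σ i) ^ 2 := Real.iSup_nonneg fun i => sq_nonneg _
  calc 4 * ∑ i, (∑ ℓ, B i ℓ * (x ℓ ⬝ᵥ β)) ^ 2 * (σ i) ^ 2
      ≤ 4 * ((⨆ i, (σ i) ^ 2) * ∑ i, (x i ⬝ᵥ w) ^ 2) := by
        simp only [h_linear]
        gcongr
        exact sum_mul_le_iSup_mul_sum fun i => sq_nonneg _
    _ ≤ 4 * ((⨆ i, (σ i) ^ 2) * ((⨆ j, hherm.eigenvalues j) * (β ⬝ᵥ A *ᵥ β))) := by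
        rw [h_quadratic]
        gcongr
    _ = _ := by ring

/-- under the consistency conditions (A positive semi-definite,
leverages bounded by `c < 1`, etc.), the variance of the linear part of
`θ̂ − θ`, namely `4 Σ_i (Σ_ℓ B_{iℓ} x_ℓ'β)² σ_i²`, is bounded above by
`4 (max_i σ_i²) · β'Aβ · λ_max(Ã)`. -/
theorem linear_part_variance_bound {n k : ℕ}
    (x : Fin n → Fin k → ℝ) (β : Fin k → ℝ) (σ : Fin n → ℝ)
    (A Sxx R : Matrix (Fin k) (Fin k) ℝ)
    (hA : A.PosSemidef)
    (hSxx : Sxx = ∑ i, vecMulVec (x i) (x i))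
    (hS : IsUnit Sxx.det)
    (hRsym : Rᵀ = R) (hRR : R * R = Sxx) (hR : IsUnit R.det)
    (c : ℝ) (hc1 : c < 1)
    (hP : ∀ i, x i ⬝ᵥ Sxx⁻¹.mulVec (x i) ≤ c)
    (Atil : Matrix (Fin k) (Fin k) ℝ)
    (hAtil : Atil = R⁻¹ * A * R⁻¹)
    (hherm : Atil.IsHermitian)
    (B : Fin n → Fin n → ℝ)
    (hB : ∀ i ℓ, B i ℓ = x i ⬝ᵥ (Sxx⁻¹ * A * Sxx⁻¹).mulVec (x ℓ)) :
    4 * ∑ i, (∑ ℓ, B i ℓ * (x ℓ ⬝ᵥ β)) ^ 2 * (σ i) ^ 2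
      ≤ 4 * (⨆ i, (σ i) ^ 2) * (β ⬝ᵥ A.mulVec β) * (⨆ j, hherm.eigenvalues j) :=
  linear_part_variance_bound_general x β σ A Sxx R hA hSxx hRsym hRR hR Atil hAtil hherm B hB
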